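/- Let $\mathfrak{J}$ be a non-trivial, monotone, uniformly vanishing, locally non-vanishing set function on dyadic cubes. For $\alpha > 0$ and $n \in \mathbb{N}$, $N_\alpha(n) := \operatorname{card}\{Q \in \mathcal{S}_n : \mathfrak{J}(Q) \ge 2^{-\alpha n}\} \le \operatorname{card}(G_{2^{\alpha n}}) = M(2^{\alpha n})$. Consequently the upper optimised coarse multifractal dimension $\overline{F} = \sup_{\alpha>0}\limsup_n \frac{\log^+ N_\alpha(n)}{\alpha n \log 2}$ satisfies $\overline{F} \le \overline{h} := \limsup_{x\to\infty}\frac{\log M(x)}{\log x}$, and similarly $\underline{F} \le \underline{h}$ for the corresponding liminf quantities. -/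

import Mathlib

/-!
Every cube `Q` of generation `n` with `𝔍(Q) ≥ 2^{-αn}` can be followed down through children
of positive `𝔍`-value (local non-vanishing) until `𝔍` first drops below `2^{-αn}`, which must
happen by uniform vanishing; the cube reached lies in `G_{2^{αn}}` and has `Q` as its ancestor
of generation `n`. Taking ancestors of generation `n` therefore maps `G_{2^{αn}}` onto the cubes
counted by `N_α(n)`, so `N_α(n) ≤ M(2^{αn})`. Along `x = 2^{αn}` this gives `F̄ ≤ h̄` directly;
for `F̲ ≤ h̲` an arbitrary large `x` is squeezed as `2^{αn} ≤ x < 2^{α(n+1)}` and the factor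
`n / (n + 1)` lost there tends to `1`.
-/

open Filter Set

noncomputable section

/-- Validity of a dyadic-cube index of generation `p.1`. -/
def validQ (d : ℕ) (p : ℕ × (Fin d → ℕ)) : Prop := ∀ i, p.2 i < 2 ^ p.1

/-- The dyadic parent of a cube index. -/
def parQ (d : ℕ) (p : ℕ × (Fin d → ℕ)) : ℕ × (Fin d → ℕ) := (p.1 - 1, fun i => p.2 i / 2)

/-- The minimal `x`-good partition `G_x`. -/
def goodPart (d : ℕ) (J : ℕ × (Fin d → ℕ) → ℝ) (x : ℝ) : Set (ℕ × (Fin d → ℕ)) :=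
  {p | validQ d p ∧ 0 < p.1 ∧ J p < 1 / x ∧ 1 / x ≤ J (parQ d p)}

/-- `M(x) = card G_x`. -/
def Mfn (d : ℕ) (J : ℕ × (Fin d → ℕ) → ℝ) (x : ℝ) : ℕ := (goodPart d J x).ncard

/-- `N_α(n) = card {Q ∈ 𝒮_n : 𝔍(Q) ≥ 2^{-αn}}`. -/
def Ncnt (d : ℕ) (J : ℕ × (Fin d → ℕ) → ℝ) (α : ℝ) (n : ℕ) : ℕ :=
  {p : ℕ × (Fin d → ℕ) | p.1 = n ∧ validQ d p ∧ (2 : ℝ) ^ (-(α * n)) ≤ J p}.ncard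

def childQ (d : ℕ) (p : ℕ × (Fin d → ℕ)) (j : Fin d → Fin 2) : ℕ × (Fin d → ℕ) :=
  (p.1 + 1, fun i => 2 * p.2 i + (j i : ℕ))

/-- The ancestor of generation `n`; for `q.1 ≤ n` the truncated subtraction makes it `q` itself. -/
def ancestorQ (d n : ℕ) (q : ℕ × (Fin d → ℕ)) : ℕ × (Fin d → ℕ) := (parQ d)^[q.1 - n] q

section DyadicCubes

variable {d : ℕ}

lemma validQ_childQ {p : ℕ × (Fin d → ℕ)} (hp : validQ d p) (j : Fin d → Fin 2) :
    validQ d (childQ d p j) := by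
  intro i
  have := hp i
  have := (j i).2
  simp only [childQ, pow_succ]
  omega

lemma parQ_childQ (p : ℕ × (Fin d → ℕ)) (j : Fin d → Fin 2) : parQ d (childQ d p j) = p := by
  refine Prod.ext (Nat.add_sub_cancel _ _) (funext fun i => ?_)
  have := (j i).2
  simp only [parQ, childQ]
  omega

lemma validQ_parQ {p : ℕ × (Fin d → ℕ)} (hp : validQ d p) : validQ d (parQ d p) := by
  intro i
  rw [parQ, Nat.div_lt_iff_lt_mul two_pos, ← pow_succ]
  exact (hp i).trans_le (Nat.pow_le_pow_right two_pos (by omega))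

lemma ancestorQ_self (q : ℕ × (Fin d → ℕ)) : ancestorQ d q.1 q = q := by
  simp [ancestorQ]

lemma parQ_ancestorQ_succ {n : ℕ} {q : ℕ × (Fin d → ℕ)} (h : n < q.1) :
    parQ d (ancestorQ d (n + 1) q) = ancestorQ d n q := by
  rw [ancestorQ, ancestorQ, ← Function.iterate_succ_apply' (parQ d)]
  congr 1
  omega

end DyadicCubes

section GoodPartition

variable {d : ℕ} {J : ℕ × (Fin d → ℕ) → ℝ} {x : ℝ}

lemma goodPart_finite {N : ℕ} (hN : ∀ p, validQ d p → N ≤ p.1 → J p < 1 / x) :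
    (goodPart d J x).Finite := by
  refine ((finite_Iic N).prod (Finite.pi fun _ => finite_Iio (2 ^ N))).subset ?_
  rintro p ⟨hp, -, -, hpar⟩
  have hpN : p.1 ≤ N := by
    by_contra! h
    exact (hN _ (validQ_parQ hp) (by simp only [parQ]; omega)).not_ge hpar
  exact ⟨hpN, fun i _ => (hp i).trans_le (Nat.pow_le_pow_right two_pos hpN)⟩

lemma exists_mem_goodPart_ancestorQ_eq (hx : 0 < x)
    (hlnv : ∀ p, validQ d p → 0 < J p → ∃ j, 0 < J (childQ d p j))
    {N : ℕ} (hN : ∀ p, validQ d p → N ≤ p.1 → J p < 1 / x)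
    {p : ℕ × (Fin d → ℕ)} (hp : validQ d p) (hJp : 1 / x ≤ J p) :
    ∃ q ∈ goodPart d J x, p.1 < q.1 ∧ ancestorQ d p.1 q = p := by
  obtain ⟨t, ht⟩ : ∃ t, N ≤ p.1 + t := ⟨N, Nat.le_add_left _ _⟩
  induction t generalizing p with
  | zero => exact absurd (hN p hp ht) hJp.not_gt
  | succ t ih =>
    obtain ⟨j, -⟩ := hlnv p hp ((one_div_pos.2 hx).trans_le hJp)
    set c := childQ d p j
    have hpc : parQ d c = p := parQ_childQ p j
    by_cases hJc : J c < 1 / x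
    · refine ⟨c, ⟨validQ_childQ hp j, p.1.succ_pos, hJc, hpc ▸ hJp⟩, p.1.lt_succ_self, ?_⟩
      rw [← parQ_ancestorQ_succ p.1.lt_succ_self]
      exact (congrArg (parQ d) (ancestorQ_self c)).trans hpc
    · obtain ⟨q, hq, hcq, hanc⟩ :=
        ih (validQ_childQ hp j) (not_lt.1 hJc) (by simp only [childQ]; omega)
      refine ⟨q, hq, Nat.lt_of_succ_lt hcq, ?_⟩
      rw [← parQ_ancestorQ_succ (Nat.lt_of_succ_lt hcq)]
      exact hanc ▸ hpc

lemma Ncnt_le_Mfn (huv : ∀ ε > (0 : ℝ), ∃ N : ℕ, ∀ p, validQ d p → N ≤ p.1 → J p < ε)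
    (hlnv : ∀ p, validQ d p → 0 < J p → ∃ j, 0 < J (childQ d p j))
    {α : ℝ} {n : ℕ} (hx : (2 : ℝ) ^ (α * n) ≤ x) : Ncnt d J α n ≤ Mfn d J x := by
  have h2 : (0 : ℝ) < 2 ^ (α * n) := Real.rpow_pos_of_pos two_pos _
  have hx0 : 0 < x := h2.trans_le hx
  have hthr : 1 / x ≤ (2 : ℝ) ^ (-(α * n)) := by
    rw [Real.rpow_neg zero_le_two, ← one_div]
    exact one_div_le_one_div_of_le h2 hx
  obtain ⟨N, hN⟩ := huv (1 / x) (one_div_pos.2 hx0)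
  have hfin := goodPart_finite hN
  have hsurj : {p : ℕ × (Fin d → ℕ) | p.1 = n ∧ validQ d p ∧ (2 : ℝ) ^ (-(α * n)) ≤ J p} ⊆
      ancestorQ d n '' goodPart d J x := by
    rintro p ⟨rfl, hp, hJp⟩
    obtain ⟨q, hq, -, hanc⟩ := exists_mem_goodPart_ancestorQ_eq hx0 hlnv hN hp (hthr.trans hJp)
    exact ⟨q, hq, hanc⟩
  exact (ncard_le_ncard hsurj (hfin.image _)).trans (ncard_image_le hfin)

end GoodPartition

lemma Real.log_natCast_le_log_natCast {m n : ℕ} (h : m ≤ n) : Real.log m ≤ Real.log n := by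
  rcases m.eq_zero_or_pos with rfl | hm
  · simpa using Real.log_natCast_nonneg n
  · exact Real.log_le_log (by exact_mod_cast hm) (by exact_mod_cast h)

section Asymptotics

variable {a : ℕ → ℝ} {b : ℝ → ℝ} {β : ℝ}

lemma liminf_le_liminf_mul_div_succ {u : ℕ → ℝ} (hu : ∀ n, 0 ≤ u n) :
    liminf (fun n => (u n : EReal)) atTop ≤
      liminf (fun n : ℕ => ((u n * (n / (n + 1)) : ℝ) : EReal)) atTop := by
  have hv : Tendsto (fun n : ℕ => ((n / (n + 1) : ℝ) : EReal)) atTop (nhds 1) :=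
    (continuous_coe_real_ereal.tendsto 1).comp (tendsto_natCast_div_add_atTop 1)
  calc liminf (fun n => (u n : EReal)) atTop
      = liminf (fun n => (u n : EReal)) atTop *
          liminf (fun n : ℕ => ((n / (n + 1) : ℝ) : EReal)) atTop := by
        rw [hv.liminf_eq, mul_one]
    _ ≤ liminf ((fun n => (u n : EReal)) * fun n : ℕ => ((n / (n + 1) : ℝ) : EReal)) atTop :=
        EReal.le_liminf_mul (.of_forall fun n => EReal.coe_nonneg.2 (hu n))
          (.of_forall fun n => EReal.coe_nonneg.2 (by positivity))
    _ = _ := by simp only [Pi.mul_def, EReal.coe_mul]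

lemma limsup_div_le_limsup_log_div (hβ : 0 < β)
    (hab : ∀ (n : ℕ) x, Real.exp (β * n) ≤ x → a n ≤ b x) :
    limsup (fun n : ℕ => ((a n / (β * n) : ℝ) : EReal)) atTop ≤
      limsup (fun x => ((b x / Real.log x : ℝ) : EReal)) atTop := by
  have hexp : Tendsto (fun n : ℕ => Real.exp (β * n)) atTop atTop :=
    Real.tendsto_exp_atTop.comp (tendsto_natCast_atTop_atTop.const_mul_atTop hβ)
  calc limsup (fun n : ℕ => ((a n / (β * n) : ℝ) : EReal)) atTop
      ≤ limsup ((fun x => ((b x / Real.log x : ℝ) : EReal)) ∘ fun n : ℕ => Real.exp (β * n))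
          atTop := by
        refine limsup_le_limsup (.of_forall fun n => ?_)
        simp only [Function.comp_apply, Real.log_exp]
        exact EReal.coe_le_coe_iff.2 (div_le_div_of_nonneg_right (hab n _ le_rfl) (by positivity))
    _ ≤ _ := hexp.limsup_comp_le_limsup

lemma liminf_div_le_liminf_log_div (hβ : 0 < β) (ha : ∀ n, 0 ≤ a n)
    (hab : ∀ (n : ℕ) x, Real.exp (β * n) ≤ x → a n ≤ b x) :
    liminf (fun n : ℕ => ((a n / (β * n) : ℝ) : EReal)) atTop ≤
      liminf (fun x => ((b x / Real.log x : ℝ) : EReal)) atTop := by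
  -- for `x > 0`, `k x` is the largest `n` with `exp (β * n) ≤ x`
  let k : ℝ → ℕ := fun x => ⌊Real.log x / β⌋₊
  have hk : Tendsto k atTop atTop :=
    tendsto_nat_floor_atTop.comp (Real.tendsto_log_atTop.atTop_div_const hβ)
  have hsucc : ∀ n : ℕ, 0 < n → a n / (β * n) * (n / (n + 1)) = a n / (β * (n + 1)) := by
    intro n hn
    field_simp
  calc liminf (fun n : ℕ => ((a n / (β * n) : ℝ) : EReal)) atTop
      ≤ liminf (fun n : ℕ => ((a n / (β * n) * (n / (n + 1)) : ℝ) : EReal)) atTop :=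
        liminf_le_liminf_mul_div_succ fun n => div_nonneg (ha n) (by positivity)
    _ = liminf (fun n : ℕ => ((a n / (β * (n + 1)) : ℝ) : EReal)) atTop :=
        liminf_congr ((eventually_gt_atTop 0).mono fun n hn => by rw [hsucc n hn])
    _ ≤ liminf ((fun n : ℕ => ((a n / (β * (n + 1)) : ℝ) : EReal)) ∘ k) atTop :=
        hk.liminf_le_liminf_comp
    _ ≤ _ := by
        refine liminf_le_liminf ((eventually_gt_atTop 1).mono fun x hx => ?_)
        have hlog : 0 < Real.log x := Real.log_pos hx
        have hlow : β * k x ≤ Real.log x := by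
          rw [mul_comm, ← le_div_iff₀ hβ]
          exact Nat.floor_le (div_nonneg hlog.le hβ.le)
        have hup : Real.log x < β * (k x + 1) := by
          rw [mul_comm, ← div_lt_iff₀ hβ]
          exact Nat.lt_floor_add_one _
        have hab' := hab (k x) x ((Real.le_log_iff_exp_le (by linarith)).1 hlow)
        refine EReal.coe_le_coe_iff.2 ?_
        calc a (k x) / (β * (k x + 1)) ≤ a (k x) / Real.log x :=
              div_le_div_of_nonneg_left (ha _) hlog hup.le
          _ ≤ b x / Real.log x := div_le_div_of_nonneg_right hab' hlog.le

end Asymptotics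

theorem stmt10_general (d : ℕ) (J : ℕ × (Fin d → ℕ) → ℝ)
    (huv : ∀ ε > (0 : ℝ), ∃ N : ℕ, ∀ p, validQ d p → N ≤ p.1 → J p < ε)
    (hlnv : ∀ p, validQ d p → 0 < J p →
      ∃ j : Fin d → Fin 2, 0 < J (p.1 + 1, fun i => 2 * p.2 i + (j i : ℕ))) :
    (∀ α : ℝ, 0 < α → ∀ n : ℕ, Ncnt d J α n ≤ Mfn d J ((2 : ℝ) ^ (α * n))) ∧
    (⨆ (α : ℝ) (_ : 0 < α), limsup (fun n : ℕ =>
        ((max 0 (Real.log (Ncnt d J α n)) / (α * n * Real.log 2) : ℝ) : EReal)) atTop) ≤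
      limsup (fun x : ℝ => ((Real.log (Mfn d J x) / Real.log x : ℝ) : EReal)) atTop ∧
    (⨆ (α : ℝ) (_ : 0 < α), liminf (fun n : ℕ =>
        ((max 0 (Real.log (Ncnt d J α n)) / (α * n * Real.log 2) : ℝ) : EReal)) atTop) ≤
      liminf (fun x : ℝ => ((Real.log (Mfn d J x) / Real.log x : ℝ) : EReal)) atTop := by
  have hlog : ∀ α : ℝ, ∀ n : ℕ, ∀ x, Real.exp (α * Real.log 2 * n) ≤ x →
      Real.log (Ncnt d J α n) ≤ Real.log (Mfn d J x) := fun α n x hx =>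
    Real.log_natCast_le_log_natCast <| Ncnt_le_Mfn huv hlnv <| by
      rwa [Real.rpow_def_of_pos two_pos, mul_left_comm, ← mul_assoc]
  have hF : ∀ (α : ℝ) (n : ℕ), max 0 (Real.log (Ncnt d J α n)) / (α * n * Real.log 2) =
      Real.log (Ncnt d J α n) / (α * Real.log 2 * n) := fun α n => by
    rw [max_eq_right (Real.log_natCast_nonneg _), mul_right_comm]
  refine ⟨fun α _ n => Ncnt_le_Mfn huv hlnv le_rfl, iSup₂_le fun α hα => ?_,
    iSup₂_le fun α hα => ?_⟩
  · simp only [hF]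
    exact limsup_div_le_limsup_log_div (by positivity) (hlog α)
  · simp only [hF]
    exact liminf_div_le_liminf_log_div (by positivity) (fun n => Real.log_natCast_nonneg _)
      (hlog α)

/-- For a non-trivial, monotone, uniformly vanishing, locally non-vanishing set
function `𝔍` on dyadic cubes: `N_α(n) ≤ M(2^{αn})` for all `α > 0`, `n`; consequently
`F̄ = sup_{α>0} limsup_n log⁺ N_α(n)/(α n log 2) ≤ h̄ = limsup_x log M(x)/log x`, and similarly
`F̲ ≤ h̲` for the corresponding liminf quantities. -/
theorem stmt10 (d : ℕ) (hd : 0 < d) (J : ℕ × (Fin d → ℕ) → ℝ)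
    (hJ0 : ∀ p, 0 ≤ J p)
    (hnt : ∃ p, validQ d p ∧ 0 < J p)
    (hmono : ∀ p, validQ d p → 0 < p.1 → J p ≤ J (parQ d p))
    (huv : ∀ ε > (0 : ℝ), ∃ N : ℕ, ∀ p, validQ d p → N ≤ p.1 → J p < ε)
    (hlnv : ∀ p, validQ d p → 0 < J p →
      ∃ j : Fin d → Fin 2, 0 < J (p.1 + 1, fun i => 2 * p.2 i + (j i : ℕ))) :
    (∀ α : ℝ, 0 < α → ∀ n : ℕ, Ncnt d J α n ≤ Mfn d J ((2 : ℝ) ^ (α * n))) ∧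
    (⨆ (α : ℝ) (_ : 0 < α), limsup (fun n : ℕ =>
        ((max 0 (Real.log (Ncnt d J α n)) / (α * n * Real.log 2) : ℝ) : EReal)) atTop) ≤
      limsup (fun x : ℝ => ((Real.log (Mfn d J x) / Real.log x : ℝ) : EReal)) atTop ∧
    (⨆ (α : ℝ) (_ : 0 < α), liminf (fun n : ℕ =>
        ((max 0 (Real.log (Ncnt d J α n)) / (α * n * Real.log 2) : ℝ) : EReal)) atTop) ≤
      liminf (fun x : ℝ => ((Real.log (Mfn d J x) / Real.log x : ℝ) : EReal)) atTop :=
  stmt10_general d J huv hlnv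

end
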